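/- arXiv:1405.6908 — 3 statements merged into one kernel-verified Lean document; each statement's English description precedes it below -/
import Mathlib

section
/- (Lemma 1) Fix a pmf ρ on X0 and a channel Γ : X1 → (pmf on Y). For any two (ρ,Γ)-admissible pmfs Q1, Q2 on X0 × X1 × X2 × Y and any λ ∈ [0,1], the convex combination λQ1 + (1−λ)Q2 is again (ρ,Γ)-admissible, and Φ(λQ1 + (1−λ)Q2) ≤ λ·Φ(Q1) + (1−λ)·Φ(Q2); that is, the function Φ(Q) = I_Q(X0;X2) − I_Q(X1;Y|X0,X2) is convex on the set of (ρ,Γ)-admissible distributions. -/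
/-!
On an admissible `Q` the entropy `H(X0) = H(ρ)` is fixed and, since `Q(y | x0, x1, x2) = Γ(y | x1)`,
`H(Y | X0, X1, X2) = -∑ Q log Γ` is linear in `Q`. Hence
`Φ(Q) = H(ρ) - H(X0 | X2) - H(Y | X0, X2) + H(Y | X0, X1, X2)`, and both negative conditional
entropies are sums of `(a, b) ↦ a log (a / b)` evaluated at pairs of marginals, which are linear
in `Q`. That function is jointly convex on `0 ≤ a ≤ b`: it is the perspective of `x log x`
(the log-sum inequality).
-/

open scoped BigOperators

/-- A probability mass function on a finite set. -/
def IsPmf {S : Type*} [Fintype S] (q : S → ℝ) : Prop :=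
  (∀ s, 0 ≤ q s) ∧ ∑ s, q s = 1

section Defs

variable {X0 X1 X2 Y : Type*} [Fintype X0] [Fintype X1] [Fintype X2] [Fintype Y]

/-- Marginal on `X0`. -/
noncomputable def margX0 (Q : X0 × X1 × X2 × Y → ℝ) (x0 : X0) : ℝ :=
  ∑ x1, ∑ x2, ∑ y, Q (x0, x1, x2, y)

/-- Marginal on `X2`. -/
noncomputable def margX2 (Q : X0 × X1 × X2 × Y → ℝ) (x2 : X2) : ℝ :=
  ∑ x0, ∑ x1, ∑ y, Q (x0, x1, x2, y)

/-- Marginal on `(X0, X2)`. -/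
noncomputable def margX0X2 (Q : X0 × X1 × X2 × Y → ℝ) (x0 : X0) (x2 : X2) : ℝ :=
  ∑ x1, ∑ y, Q (x0, x1, x2, y)

/-- Marginal on `(X0, X2, Y)`. -/
noncomputable def margX0X2Y (Q : X0 × X1 × X2 × Y → ℝ) (x0 : X0) (x2 : X2) (y : Y) : ℝ :=
  ∑ x1, Q (x0, x1, x2, y)

/-- Marginal on `(X0, X1, X2)`. -/
noncomputable def margX0X1X2 (Q : X0 × X1 × X2 × Y → ℝ) (x0 : X0) (x1 : X1) (x2 : X2) : ℝ :=
  ∑ y, Q (x0, x1, x2, y)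

/-- Entropy `H_Q(X0)` (natural log, `0 log 0 = 0` holds by `Real.log 0 = 0`). -/
noncomputable def H_X0 (Q : X0 × X1 × X2 × Y → ℝ) : ℝ :=
  -∑ x0, margX0 Q x0 * Real.log (margX0 Q x0)

/-- Entropy `H_Q(X2)`. -/
noncomputable def H_X2 (Q : X0 × X1 × X2 × Y → ℝ) : ℝ :=
  -∑ x2, margX2 Q x2 * Real.log (margX2 Q x2)

/-- Joint entropy `H_Q(X0, X2)`. -/
noncomputable def H_X0X2 (Q : X0 × X1 × X2 × Y → ℝ) : ℝ :=
  -∑ x0, ∑ x2, margX0X2 Q x0 x2 * Real.log (margX0X2 Q x0 x2)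

/-- Conditional entropy `H_Q(Y, X0 | X2)` (terms with zero mass contribute `0`
since `0 * log _ = 0` and `Real.log 0 = 0`, `0 / 0 = 0`). -/
noncomputable def HcondYX0_X2 (Q : X0 × X1 × X2 × Y → ℝ) : ℝ :=
  -∑ x0, ∑ x2, ∑ y,
    margX0X2Y Q x0 x2 y * Real.log (margX0X2Y Q x0 x2 y / margX2 Q x2)

/-- Conditional entropy `H_Q(Y | X0, X2)`. -/
noncomputable def HcondY_X0X2 (Q : X0 × X1 × X2 × Y → ℝ) : ℝ :=
  -∑ x0, ∑ x2, ∑ y,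
    margX0X2Y Q x0 x2 y * Real.log (margX0X2Y Q x0 x2 y / margX0X2 Q x0 x2)

/-- Conditional entropy `H_Q(Y | X0, X1, X2)`. -/
noncomputable def HcondY_X0X1X2 (Q : X0 × X1 × X2 × Y → ℝ) : ℝ :=
  -∑ x0, ∑ x1, ∑ x2, ∑ y,
    Q (x0, x1, x2, y) * Real.log (Q (x0, x1, x2, y) / margX0X1X2 Q x0 x1 x2)

/-- Mutual information `I_Q(X0; X2) = H(X0) + H(X2) - H(X0, X2)`. -/
noncomputable def mutI_X0X2 (Q : X0 × X1 × X2 × Y → ℝ) : ℝ :=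
  H_X0 Q + H_X2 Q - H_X0X2 Q

/-- Conditional mutual information `I_Q(X1; Y | X0, X2)`. -/
noncomputable def condMutI_X1Y_X0X2 (Q : X0 × X1 × X2 × Y → ℝ) : ℝ :=
  HcondY_X0X2 Q - HcondY_X0X1X2 Q

/-- `Φ(Q) = I_Q(X0; X2) - I_Q(X1; Y | X0, X2)`. -/
noncomputable def Phi (Q : X0 × X1 × X2 × Y → ℝ) : ℝ :=
  mutI_X0X2 Q - condMutI_X1Y_X0X2 Q

/-- A channel `Γ : X1 → Δ(Y)`. -/
def IsChannel (Γ : X1 → Y → ℝ) : Prop :=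
  ∀ x1, (∀ y, 0 ≤ Γ x1 y) ∧ ∑ y, Γ x1 y = 1

/-- `(ρ, Γ)`-admissibility: `Q` is a pmf whose `X0`-marginal is `ρ` and which
factorizes through the channel `Γ`. -/
def IsAdmissible (ρ : X0 → ℝ) (Γ : X1 → Y → ℝ) (Q : X0 × X1 × X2 × Y → ℝ) : Prop :=
  IsPmf Q ∧ (∀ x0, margX0 Q x0 = ρ x0) ∧
    ∀ x0 x1 x2 y, Q (x0, x1, x2, y) = Γ x1 y * margX0X1X2 Q x0 x1 x2

end Defs

open Real Finset

theorem add_mul_log_div_add_le {a₁ a₂ b₁ b₂ : ℝ} (ha₁ : 0 ≤ a₁) (ha₂ : 0 ≤ a₂)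
    (h₁ : a₁ ≤ b₁) (h₂ : a₂ ≤ b₂) :
    (a₁ + a₂) * log ((a₁ + a₂) / (b₁ + b₂)) ≤ a₁ * log (a₁ / b₁) + a₂ * log (a₂ / b₂) := by
  rcases (ha₁.trans h₁).eq_or_lt with rfl | hb₁
  · obtain rfl : a₁ = 0 := le_antisymm h₁ ha₁
    simp
  rcases (ha₂.trans h₂).eq_or_lt with rfl | hb₂
  · obtain rfl : a₂ = 0 := le_antisymm h₂ ha₂
    simp
  have hb : 0 < b₁ + b₂ := add_pos hb₁ hb₂
  -- Jensen for `x log x` at the points `aᵢ / bᵢ` with weights `bᵢ / (b₁ + b₂)`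
  have hJ := convexOn_mul_log.2 (Set.mem_Ici.2 (div_nonneg ha₁ hb₁.le))
    (Set.mem_Ici.2 (div_nonneg ha₂ hb₂.le)) (div_nonneg hb₁.le hb.le) (div_nonneg hb₂.le hb.le)
    (by rw [← add_div, div_self hb.ne'])
  have hmean : b₁ / (b₁ + b₂) * (a₁ / b₁) + b₂ / (b₁ + b₂) * (a₂ / b₂) =
      (a₁ + a₂) / (b₁ + b₂) := by
    field_simp
  simp only [smul_eq_mul, hmean] at hJ
  generalize log ((a₁ + a₂) / (b₁ + b₂)) = l at hJ ⊢
  generalize log (a₁ / b₁) = l₁ at hJ ⊢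
  generalize log (a₂ / b₂) = l₂ at hJ ⊢
  refine (div_le_div_iff_of_pos_right hb).1 ?_
  convert hJ using 1 <;> field_simp

theorem mul_mul_log_div_mul {c : ℝ} (hc : 0 ≤ c) (a b : ℝ) :
    c * a * log (c * a / (c * b)) = c * (a * log (a / b)) := by
  rcases hc.eq_or_lt with rfl | hc
  · simp
  · rw [mul_div_mul_left _ _ hc.ne', mul_assoc]

theorem convexOn_mul_log_div :
    ConvexOn ℝ {p : ℝ × ℝ | 0 ≤ p.1 ∧ p.1 ≤ p.2} fun p => p.1 * log (p.1 / p.2) := by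
  refine ⟨?_, ?_⟩
  · rintro x ⟨hx₀, hx⟩ y ⟨hy₀, hy⟩ α β hα hβ -
    simp only [Set.mem_ofPred_eq, Prod.fst_add, Prod.snd_add, Prod.smul_fst, Prod.smul_snd,
      smul_eq_mul]
    exact ⟨add_nonneg (mul_nonneg hα hx₀) (mul_nonneg hβ hy₀),
      add_le_add (mul_le_mul_of_nonneg_left hx hα) (mul_le_mul_of_nonneg_left hy hβ)⟩
  · rintro x ⟨hx₀, hx⟩ y ⟨hy₀, hy⟩ α β hα hβ -
    simp only [Prod.fst_add, Prod.snd_add, Prod.smul_fst, Prod.smul_snd, smul_eq_mul]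
    rw [← mul_mul_log_div_mul hα, ← mul_mul_log_div_mul hβ]
    exact add_mul_log_div_add_le (mul_nonneg hα hx₀) (mul_nonneg hβ hy₀)
      (mul_le_mul_of_nonneg_left hx hα) (mul_le_mul_of_nonneg_left hy hβ)

theorem convexOn_finset_sum {ι E : Type*} [AddCommGroup E] [Module ℝ E] {s : Set E}
    (hs : Convex ℝ s) (t : Finset ι) {f : ι → E → ℝ} (hf : ∀ i ∈ t, ConvexOn ℝ s (f i)) :
    ConvexOn ℝ s fun x => ∑ i ∈ t, f i x := by
  simpa only [← Finset.sum_apply] using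
    Finset.sum_induction f (ConvexOn ℝ s) (fun _ _ => ConvexOn.add) (convexOn_const 0 hs) hf

theorem convexOn_mul_log_div_of_isLinearMap {E : Type*} [AddCommGroup E] [Module ℝ E]
    {s : Set E} (hs : Convex ℝ s) {a b : E → ℝ} (ha : IsLinearMap ℝ a) (hb : IsLinearMap ℝ b)
    (hab : ∀ x ∈ s, 0 ≤ a x ∧ a x ≤ b x) :
    ConvexOn ℝ s fun x => a x * log (a x / b x) :=
  (convexOn_mul_log_div.comp_linearMap ((ha.mk' a).prod (hb.mk' b))).subset hab hs

section Marginals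

variable {X0 X1 X2 Y : Type*}

theorem isLinearMap_margX0 [Fintype X1] [Fintype X2] [Fintype Y] (x0 : X0) :
    IsLinearMap ℝ fun Q : X0 × X1 × X2 × Y → ℝ => margX0 Q x0 :=
  ⟨fun _ _ => by simp only [margX0, Pi.add_apply, sum_add_distrib],
    fun _ _ => by simp only [margX0, Pi.smul_apply, smul_eq_mul, mul_sum]⟩

theorem isLinearMap_margX2 [Fintype X0] [Fintype X1] [Fintype Y] (x2 : X2) :
    IsLinearMap ℝ fun Q : X0 × X1 × X2 × Y → ℝ => margX2 Q x2 :=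
  ⟨fun _ _ => by simp only [margX2, Pi.add_apply, sum_add_distrib],
    fun _ _ => by simp only [margX2, Pi.smul_apply, smul_eq_mul, mul_sum]⟩

theorem isLinearMap_margX0X2 [Fintype X1] [Fintype Y] (x0 : X0) (x2 : X2) :
    IsLinearMap ℝ fun Q : X0 × X1 × X2 × Y → ℝ => margX0X2 Q x0 x2 :=
  ⟨fun _ _ => by simp only [margX0X2, Pi.add_apply, sum_add_distrib],
    fun _ _ => by simp only [margX0X2, Pi.smul_apply, smul_eq_mul, mul_sum]⟩

theorem isLinearMap_margX0X2Y [Fintype X1] (x0 : X0) (x2 : X2) (y : Y) :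
    IsLinearMap ℝ fun Q : X0 × X1 × X2 × Y → ℝ => margX0X2Y Q x0 x2 y :=
  ⟨fun _ _ => by simp only [margX0X2Y, Pi.add_apply, sum_add_distrib],
    fun _ _ => by simp only [margX0X2Y, Pi.smul_apply, smul_eq_mul, mul_sum]⟩

theorem isLinearMap_margX0X1X2 [Fintype Y] (x0 : X0) (x1 : X1) (x2 : X2) :
    IsLinearMap ℝ fun Q : X0 × X1 × X2 × Y → ℝ => margX0X1X2 Q x0 x1 x2 :=
  ⟨fun _ _ => by simp only [margX0X1X2, Pi.add_apply, sum_add_distrib],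
    fun _ _ => by simp only [margX0X1X2, Pi.smul_apply, smul_eq_mul, mul_sum]⟩

variable {Q : X0 × X1 × X2 × Y → ℝ}

theorem margX0X2_nonneg [Fintype X1] [Fintype Y] (hQ : ∀ v, 0 ≤ Q v) (x0 : X0) (x2 : X2) :
    0 ≤ margX0X2 Q x0 x2 :=
  sum_nonneg fun _ _ => sum_nonneg fun _ _ => hQ _

theorem margX0X2Y_nonneg [Fintype X1] (hQ : ∀ v, 0 ≤ Q v) (x0 : X0) (x2 : X2) (y : Y) :
    0 ≤ margX0X2Y Q x0 x2 y :=
  sum_nonneg fun _ _ => hQ _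

theorem margX0X2_le_margX2 [Fintype X0] [Fintype X1] [Fintype Y] (hQ : ∀ v, 0 ≤ Q v) (x0 : X0)
    (x2 : X2) :
    margX0X2 Q x0 x2 ≤ margX2 Q x2 :=
  single_le_sum (f := fun x0 => margX0X2 Q x0 x2) (fun x0 _ => margX0X2_nonneg hQ x0 x2)
    (mem_univ x0)

theorem margX0X2Y_le_margX0X2 [Fintype X1] [Fintype Y] (hQ : ∀ v, 0 ≤ Q v) (x0 : X0) (x2 : X2)
    (y : Y) :
    margX0X2Y Q x0 x2 y ≤ margX0X2 Q x0 x2 := by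
  rw [margX0X2, sum_comm]
  exact single_le_sum (f := fun y => margX0X2Y Q x0 x2 y)
    (fun y _ => margX0X2Y_nonneg hQ x0 x2 y) (mem_univ y)

end Marginals

theorem mul_log_div_eq_sub_of_le {a b : ℝ} (ha : 0 ≤ a) (hab : a ≤ b) :
    a * log (a / b) = a * log a - a * log b := by
  rcases ha.eq_or_lt with rfl | ha
  · simp
  · rw [log_div ha.ne' (ha.trans_le hab).ne', mul_sub]

section Admissible

variable {X0 X1 X2 Y : Type*} [Fintype X0] [Fintype X1] [Fintype X2] [Fintype Y]
  {ρ : X0 → ℝ} {Γ : X1 → Y → ℝ} {Q : X0 × X1 × X2 × Y → ℝ}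

theorem H_X2_sub_H_X0X2_eq (hQ : ∀ v, 0 ≤ Q v) :
    H_X2 Q - H_X0X2 Q =
      ∑ x0, ∑ x2, margX0X2 Q x0 x2 * log (margX0X2 Q x0 x2 / margX2 Q x2) := by
  simp only [mul_log_div_eq_sub_of_le (margX0X2_nonneg hQ _ _) (margX0X2_le_margX2 hQ _ _),
    sum_sub_distrib]
  rw [sum_comm (f := fun x0 x2 => margX0X2 Q x0 x2 * log (margX2 Q x2))]
  have hX2 : ∀ x2, ∑ x0, margX0X2 Q x0 x2 = margX2 Q x2 := fun _ => rfl
  simp only [← sum_mul, hX2, H_X2, H_X0X2]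
  ring

theorem HcondY_X0X1X2_eq_of_factor
    (hfac : ∀ x0 x1 x2 y, Q (x0, x1, x2, y) = Γ x1 y * margX0X1X2 Q x0 x1 x2) :
    HcondY_X0X1X2 Q = -∑ x0, ∑ x1, ∑ x2, ∑ y, Q (x0, x1, x2, y) * log (Γ x1 y) := by
  unfold HcondY_X0X1X2
  congr 1
  refine sum_congr rfl fun x0 _ => sum_congr rfl fun x1 _ =>
    sum_congr rfl fun x2 _ => sum_congr rfl fun y _ => ?_
  rcases eq_or_ne (margX0X1X2 Q x0 x1 x2) 0 with h | h
  · simp [hfac x0 x1 x2 y, h]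
  · rw [hfac x0 x1 x2 y, mul_div_cancel_right₀ _ h]

theorem Phi_eq_of_isAdmissible (hQ : IsAdmissible ρ Γ Q) :
    Phi Q = -∑ x0, ρ x0 * log (ρ x0)
      + ∑ x0, ∑ x2, margX0X2 Q x0 x2 * log (margX0X2 Q x0 x2 / margX2 Q x2)
      + ∑ x0, ∑ x2, ∑ y, margX0X2Y Q x0 x2 y * log (margX0X2Y Q x0 x2 y / margX0X2 Q x0 x2)
      - ∑ x0, ∑ x1, ∑ x2, ∑ y, Q (x0, x1, x2, y) * log (Γ x1 y) := by
  obtain ⟨⟨hQ₀, -⟩, hρ, hfac⟩ := hQ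
  rw [← H_X2_sub_H_X0X2_eq hQ₀]
  simp only [Phi, mutI_X0X2, condMutI_X1Y_X0X2, HcondY_X0X1X2_eq_of_factor hfac, HcondY_X0X2,
    H_X0, hρ]
  ring

theorem convex_setOf_isAdmissible (ρ : X0 → ℝ) (Γ : X1 → Y → ℝ) :
    Convex ℝ {Q : X0 × X1 × X2 × Y → ℝ | IsAdmissible ρ Γ Q} := by
  rintro Q₁ ⟨⟨hQ₁, hsum₁⟩, hρ₁, hfac₁⟩ Q₂ ⟨⟨hQ₂, hsum₂⟩, hρ₂, hfac₂⟩ a b ha hb hab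
  refine ⟨⟨fun v => ?_, ?_⟩, fun x0 => ?_, fun x0 x1 x2 y => ?_⟩
  · exact add_nonneg (mul_nonneg ha (hQ₁ v)) (mul_nonneg hb (hQ₂ v))
  · simp only [Pi.add_apply, Pi.smul_apply, smul_eq_mul, sum_add_distrib, ← mul_sum, hsum₁,
      hsum₂, mul_one, hab]
  · have h := isLinearMap_margX0 (X1 := X1) (X2 := X2) (Y := Y) x0
    rw [h.map_add, h.map_smul, h.map_smul, hρ₁, hρ₂, smul_eq_mul, smul_eq_mul, ← add_mul, hab,
      one_mul]
  · have h := isLinearMap_margX0X1X2 (Y := Y) x0 x1 x2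
    rw [h.map_add, h.map_smul, h.map_smul]
    simp only [Pi.add_apply, Pi.smul_apply, smul_eq_mul, hfac₁ x0 x1 x2 y, hfac₂ x0 x1 x2 y]
    ring

theorem convexOn_Phi (ρ : X0 → ℝ) (Γ : X1 → Y → ℝ) :
    ConvexOn ℝ {Q : X0 × X1 × X2 × Y → ℝ | IsAdmissible ρ Γ Q} Phi := by
  have hs := convex_setOf_isAdmissible (X2 := X2) ρ Γ
  have hA : ConvexOn ℝ {Q | IsAdmissible ρ Γ Q} fun Q =>
      ∑ x0, ∑ x2, margX0X2 Q x0 x2 * log (margX0X2 Q x0 x2 / margX2 Q x2) :=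
    convexOn_finset_sum hs _ fun x0 _ => convexOn_finset_sum hs _ fun x2 _ =>
      convexOn_mul_log_div_of_isLinearMap hs (isLinearMap_margX0X2 x0 x2) (isLinearMap_margX2 x2)
        fun _ hQ => ⟨margX0X2_nonneg hQ.1.1 x0 x2, margX0X2_le_margX2 hQ.1.1 x0 x2⟩
  have hB : ConvexOn ℝ {Q | IsAdmissible ρ Γ Q} fun Q =>
      ∑ x0, ∑ x2, ∑ y, margX0X2Y Q x0 x2 y * log (margX0X2Y Q x0 x2 y / margX0X2 Q x0 x2) :=
    convexOn_finset_sum hs _ fun x0 _ => convexOn_finset_sum hs _ fun x2 _ =>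
      convexOn_finset_sum hs _ fun y _ =>
      convexOn_mul_log_div_of_isLinearMap hs (isLinearMap_margX0X2Y x0 x2 y)
        (isLinearMap_margX0X2 x0 x2)
        fun _ hQ => ⟨margX0X2Y_nonneg hQ.1.1 x0 x2 y, margX0X2Y_le_margX0X2 hQ.1.1 x0 x2 y⟩
  have hL : IsLinearMap ℝ fun Q : X0 × X1 × X2 × Y → ℝ =>
      ∑ x0, ∑ x1, ∑ x2, ∑ y, Q (x0, x1, x2, y) * log (Γ x1 y) :=
    ⟨fun _ _ => by simp only [Pi.add_apply, add_mul, sum_add_distrib],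
      fun _ _ => by simp only [Pi.smul_apply, smul_eq_mul, mul_assoc, mul_sum]⟩
  exact ((((convexOn_const _ hs).add hA).add hB).sub ((hL.mk' _).concaveOn hs)).congr
    fun Q hQ => (Phi_eq_of_isAdmissible hQ).symm

end Admissible

theorem phi_convex_on_admissible_general
    {X0 X1 X2 Y : Type*} [Fintype X0] [Fintype X1] [Fintype X2] [Fintype Y]
    (ρ : X0 → ℝ) (Γ : X1 → Y → ℝ)
    (Q1 Q2 : X0 × X1 × X2 × Y → ℝ)
    (hQ1 : IsAdmissible ρ Γ Q1) (hQ2 : IsAdmissible ρ Γ Q2)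
    (lam : ℝ) (hlam : lam ∈ Set.Icc (0 : ℝ) 1) :
    IsAdmissible ρ Γ (fun v => lam * Q1 v + (1 - lam) * Q2 v) ∧
    Phi (fun v => lam * Q1 v + (1 - lam) * Q2 v) ≤
      lam * Phi Q1 + (1 - lam) * Phi Q2 :=
  ⟨convex_setOf_isAdmissible ρ Γ hQ1 hQ2 hlam.1 (sub_nonneg.2 hlam.2) (add_sub_cancel _ _),
    (convexOn_Phi ρ Γ).2 hQ1 hQ2 hlam.1 (sub_nonneg.2 hlam.2) (add_sub_cancel _ _)⟩

/-- Lemma 1: the set of `(ρ, Γ)`-admissible distributions is stable under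
convex combinations, and `Φ(Q) = I_Q(X0;X2) - I_Q(X1;Y|X0,X2)` is convex on it. -/
theorem phi_convex_on_admissible
    {X0 X1 X2 Y : Type*} [Fintype X0] [Fintype X1] [Fintype X2] [Fintype Y]
    (ρ : X0 → ℝ) (hρ : IsPmf ρ) (Γ : X1 → Y → ℝ) (hΓ : IsChannel Γ)
    (Q1 Q2 : X0 × X1 × X2 × Y → ℝ)
    (hQ1 : IsAdmissible ρ Γ Q1) (hQ2 : IsAdmissible ρ Γ Q2)
    (lam : ℝ) (hlam : lam ∈ Set.Icc (0 : ℝ) 1) :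
    IsAdmissible ρ Γ (fun v => lam * Q1 v + (1 - lam) * Q2 v) ∧
    Phi (fun v => lam * Q1 v + (1 - lam) * Q2 v) ≤
      lam * Phi Q1 + (1 - lam) * Phi Q2 :=
  phi_convex_on_admissible_general ρ Γ Q1 Q2 hQ1 hQ2 lam hlam
end

section
/- Fix a pmf ρ on X0 and a channel Γ : X1 → (pmf on Y). For any t ≥ 1 and any (ρ,Γ)-admissible pmfs P_1, …, P_t on X0 × X1 × X2 × Y, the time-averaged distribution P̄ = (1/t)·∑_{i=1}^t P_i is (ρ,Γ)-admissible and satisfies Φ(P̄) ≤ (1/t)·∑_{i=1}^t Φ(P_i); equivalently, I_{P̄}(X1;Y|X0,X2) − I_{P̄}(X0;X2) ≥ (1/t)·∑_{i=1}^t [ I_{P_i}(X1;Y|X0,X2) − I_{P_i}(X0;X2) ]. -/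
open scoped BigOperators

/-!
Write `Φ = I(X0;X2) - H(Y|X0,X2) + H(Y|X0,X1,X2)`. Admissibility consists of linear
constraints, so it survives mixtures. For admissible `Q` the term
`H(Y|X0,X1,X2) = -∑ Q(x0,x1,x2) ∑_y Γ(y|x1) log Γ(y|x1)` is linear in `Q`, while
`-H(Y|X0,X2)` and, because the `X0`-marginal is pinned to `ρ`,
`I(X0;X2) = ∑ Q(x0,x2) log (Q(x0,x2) / (ρ(x0) Q(x2)))` are sums of terms `a log (a / b)`
with `a`, `b` linear in `Q`. By the log-sum inequality these are convex, so `Φ` is convex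
on admissible laws and the time average is a convex combination.
-/

open Real Finset

theorem mul_log_le_mul_log_div_add {a b r : ℝ} (ha : 0 ≤ a) (hb : 0 ≤ b) (hab : b = 0 → a = 0)
    (hr : 0 < r) : a * log r ≤ a * log (a / b) + (b * r - a) := by
  rcases ha.eq_or_lt with rfl | ha
  · simpa using mul_nonneg hb hr.le
  have hb : 0 < b := hb.lt_of_ne fun h => ha.ne' (hab h.symm)
  calc a * log r = a * log (a / b) + a * log (b * r / a) := by
        rw [← mul_add, ← log_mul (by positivity) (by positivity)]
        field_simp
    _ ≤ a * log (a / b) + a * (b * r / a - 1) := by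
        gcongr
        exact log_le_sub_one_of_pos (by positivity)
    _ = a * log (a / b) + (b * r - a) := by field_simp

theorem sum_mul_log_div_sum_le {ι : Type*} (s : Finset ι) {a b : ι → ℝ}
    (ha : ∀ i ∈ s, 0 ≤ a i) (hb : ∀ i ∈ s, 0 ≤ b i) (hab : ∀ i ∈ s, b i = 0 → a i = 0) :
    (∑ i ∈ s, a i) * log ((∑ i ∈ s, a i) / ∑ i ∈ s, b i) ≤ ∑ i ∈ s, a i * log (a i / b i) := by
  rcases (sum_nonneg ha).eq_or_lt with hA | hA
  · have ha0 : ∀ i ∈ s, a i = 0 := (sum_eq_zero_iff_of_nonneg ha).mp hA.symm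
    rw [← hA, zero_mul]
    exact (sum_eq_zero fun i hi => by rw [ha0 i hi, zero_mul]).ge
  set A := ∑ i ∈ s, a i
  set B := ∑ i ∈ s, b i
  have hB : 0 < B := by
    refine (sum_nonneg hb).lt_of_ne fun hB => hA.ne' (sum_eq_zero fun i hi => hab i hi ?_)
    exact (sum_eq_zero_iff_of_nonneg hb).mp hB.symm i hi
  calc A * log (A / B) = ∑ i ∈ s, a i * log (A / B) := sum_mul ..
    _ ≤ ∑ i ∈ s, (a i * log (a i / b i) + (b i * (A / B) - a i)) :=
        sum_le_sum fun i hi =>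
          mul_log_le_mul_log_div_add (ha i hi) (hb i hi) (hab i hi) (by positivity)
    _ = ∑ i ∈ s, a i * log (a i / b i) + (B * (A / B) - A) := by
        rw [sum_add_distrib, sum_sub_distrib, sum_mul]
    _ = ∑ i ∈ s, a i * log (a i / b i) := by rw [mul_div_cancel₀ _ hB.ne', sub_self, add_zero]

theorem sum_mul_log_div_sum_le_of_weights {ι : Type*} [Fintype ι] {w a b : ι → ℝ}
    (hw : ∀ i, 0 ≤ w i) (ha : ∀ i, 0 ≤ a i) (hb : ∀ i, 0 ≤ b i) (hab : ∀ i, b i = 0 → a i = 0) :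
    (∑ i, w i * a i) * log ((∑ i, w i * a i) / ∑ i, w i * b i) ≤
      ∑ i, w i * (a i * log (a i / b i)) := by
  refine (sum_mul_log_div_sum_le univ (fun i _ => mul_nonneg (hw i) (ha i))
    (fun i _ => mul_nonneg (hw i) (hb i)) fun i _ h => ?_).trans_eq (sum_congr rfl fun i _ => ?_)
  · rcases mul_eq_zero.mp h with h | h <;> simp [h, hab]
  · rcases (hw i).eq_or_lt with h | h
    · simp [← h]
    · rw [mul_div_mul_left _ _ h.ne', mul_assoc]

theorem IsPmf.mixture {S ι : Type*} [Fintype S] [Fintype ι] {w : ι → ℝ} {q : ι → S → ℝ}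
    (hw : ∀ i, 0 ≤ w i) (hw1 : ∑ i, w i = 1) (hq : ∀ i, IsPmf (q i)) :
    IsPmf (∑ i, w i • q i) := by
  refine ⟨fun s => ?_, ?_⟩
  · simpa using sum_nonneg fun i _ => mul_nonneg (hw i) ((hq i).1 s)
  · simp only [Finset.sum_apply, Pi.smul_apply, smul_eq_mul]
    rw [sum_comm]
    simp [← mul_sum, (hq _).2, hw1]

section Distributions

variable {X0 X1 X2 Y : Type*}

def FactorsThrough [Fintype Y] (Γ : X1 → Y → ℝ) (Q : X0 × X1 × X2 × Y → ℝ) : Prop :=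
  ∀ x0 x1 x2 y, Q (x0, x1, x2, y) = Γ x1 y * margX0X1X2 Q x0 x1 x2

theorem margX0_eq_sum_margX0X2 [Fintype X1] [Fintype X2] [Fintype Y]
    (Q : X0 × X1 × X2 × Y → ℝ) (x0 : X0) :
    margX0 Q x0 = ∑ x2, margX0X2 Q x0 x2 :=
  sum_comm

theorem margX0X2_eq_sum_margX0X2Y [Fintype X1] [Fintype Y]
    (Q : X0 × X1 × X2 × Y → ℝ) (x0 : X0) (x2 : X2) :
    margX0X2 Q x0 x2 = ∑ y, margX0X2Y Q x0 x2 y :=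
  sum_comm

variable {Q : X0 × X1 × X2 × Y → ℝ}

theorem margX0_nonneg [Fintype X1] [Fintype X2] [Fintype Y]
    (hQ : ∀ v, 0 ≤ Q v) (x0 : X0) :
    0 ≤ margX0 Q x0 :=
  sum_nonneg fun _ _ => sum_nonneg fun _ _ => sum_nonneg fun _ _ => hQ _

theorem margX2_nonneg [Fintype X0] [Fintype X1] [Fintype Y]
    (hQ : ∀ v, 0 ≤ Q v) (x2 : X2) :
    0 ≤ margX2 Q x2 :=
  sum_nonneg fun _ _ => margX0X2_nonneg hQ _ _

theorem margX0X2_le_margX0 [Fintype X1] [Fintype X2] [Fintype Y]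
    (hQ : ∀ v, 0 ≤ Q v) (x0 : X0) (x2 : X2) :
    margX0X2 Q x0 x2 ≤ margX0 Q x0 := by
  rw [margX0_eq_sum_margX0X2]
  exact single_le_sum (fun x2 _ => margX0X2_nonneg hQ x0 x2) (mem_univ x2)

theorem mutI_X0X2_eq_sum_mul_log_div [Fintype X0] [Fintype X1] [Fintype X2] [Fintype Y]
    (hQ : ∀ v, 0 ≤ Q v) :
    mutI_X0X2 Q = ∑ x0, ∑ x2, margX0X2 Q x0 x2 *
      log (margX0X2 Q x0 x2 / (margX0 Q x0 * margX2 Q x2)) := by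
  have hsplit : ∀ x0 x2, margX0X2 Q x0 x2 * log (margX0X2 Q x0 x2 / (margX0 Q x0 * margX2 Q x2)) =
      margX0X2 Q x0 x2 * log (margX0X2 Q x0 x2) - margX0X2 Q x0 x2 * log (margX0 Q x0)
        - margX0X2 Q x0 x2 * log (margX2 Q x2) := by
    intro x0 x2
    rcases (margX0X2_nonneg hQ x0 x2).eq_or_lt with h | h
    · simp [← h]
    have h0 := h.trans_le (margX0X2_le_margX0 hQ x0 x2)
    have h2 := h.trans_le (margX0X2_le_margX2 hQ x0 x2)
    rw [log_div h.ne' (by positivity), log_mul h0.ne' h2.ne']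
    ring
  have hX0 : ∑ x0, margX0 Q x0 * log (margX0 Q x0) =
      ∑ x0, ∑ x2, margX0X2 Q x0 x2 * log (margX0 Q x0) := by
    simp only [← sum_mul, ← margX0_eq_sum_margX0X2]
  have hX2 : ∑ x2, margX2 Q x2 * log (margX2 Q x2) =
      ∑ x0, ∑ x2, margX0X2 Q x0 x2 * log (margX2 Q x2) := by
    rw [sum_comm]
    simp only [← sum_mul, margX2, margX0X2]
  simp only [hsplit, sum_sub_distrib, mutI_X0X2, H_X0, H_X2, H_X0X2, hX0, hX2]
  ring

theorem HcondY_X0X1X2_eq_of_factorsThrough [Fintype X0] [Fintype X1] [Fintype X2] [Fintype Y]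
    {Γ : X1 → Y → ℝ} (hQ : FactorsThrough Γ Q) :
    HcondY_X0X1X2 Q =
      -∑ x0, ∑ x1, ∑ x2, margX0X1X2 Q x0 x1 x2 * ∑ y, Γ x1 y * log (Γ x1 y) := by
  refine congrArg Neg.neg (sum_congr rfl fun x0 _ => sum_congr rfl fun x1 _ =>
    sum_congr rfl fun x2 _ => ?_)
  rw [mul_sum]
  refine sum_congr rfl fun y _ => ?_
  rw [hQ x0 x1 x2 y]
  rcases eq_or_ne (margX0X1X2 Q x0 x1 x2) 0 with h | h
  · simp [h]
  · rw [mul_div_cancel_right₀ _ h]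
    ring

end Distributions

section Mixture

variable {X0 X1 X2 Y ι : Type*} [Fintype ι] (w : ι → ℝ) (P : ι → X0 × X1 × X2 × Y → ℝ)

theorem margX0_mixture [Fintype X1] [Fintype X2] [Fintype Y] (x0 : X0) :
    margX0 (∑ i, w i • P i) x0 = ∑ i, w i * margX0 (P i) x0 := by
  simp [margX0, Finset.sum_apply, mul_sum, sum_comm (t := (univ : Finset ι))]

theorem margX2_mixture [Fintype X0] [Fintype X1] [Fintype Y] (x2 : X2) :
    margX2 (∑ i, w i • P i) x2 = ∑ i, w i * margX2 (P i) x2 := by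
  simp [margX2, Finset.sum_apply, mul_sum, sum_comm (t := (univ : Finset ι))]

theorem margX0X2_mixture [Fintype X1] [Fintype Y] (x0 : X0) (x2 : X2) :
    margX0X2 (∑ i, w i • P i) x0 x2 = ∑ i, w i * margX0X2 (P i) x0 x2 := by
  simp [margX0X2, Finset.sum_apply, mul_sum, sum_comm (t := (univ : Finset ι))]

theorem margX0X2Y_mixture [Fintype X1] (x0 : X0) (x2 : X2) (y : Y) :
    margX0X2Y (∑ i, w i • P i) x0 x2 y = ∑ i, w i * margX0X2Y (P i) x0 x2 y := by
  simp [margX0X2Y, Finset.sum_apply, mul_sum, sum_comm (t := (univ : Finset ι))]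

theorem margX0X1X2_mixture [Fintype Y] (x0 : X0) (x1 : X1) (x2 : X2) :
    margX0X1X2 (∑ i, w i • P i) x0 x1 x2 = ∑ i, w i * margX0X1X2 (P i) x0 x1 x2 := by
  simp [margX0X1X2, Finset.sum_apply, mul_sum, sum_comm (t := (univ : Finset ι))]

variable {w P}

theorem FactorsThrough.mixture [Fintype Y] {Γ : X1 → Y → ℝ} (hP : ∀ i, FactorsThrough Γ (P i)) :
    FactorsThrough Γ (∑ i, w i • P i) := by
  intro x0 x1 x2 y
  simp only [margX0X1X2_mixture, Finset.sum_apply, Pi.smul_apply, smul_eq_mul, hP _ x0 x1 x2 y,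
    mul_sum]
  exact sum_congr rfl fun i _ => mul_left_comm _ _ _

theorem IsAdmissible.mixture [Fintype X0] [Fintype X1] [Fintype X2] [Fintype Y] {ρ : X0 → ℝ}
    {Γ : X1 → Y → ℝ} (hw : ∀ i, 0 ≤ w i) (hw1 : ∑ i, w i = 1)
    (hP : ∀ i, IsAdmissible ρ Γ (P i)) : IsAdmissible ρ Γ (∑ i, w i • P i) :=
  ⟨IsPmf.mixture hw hw1 fun i => (hP i).1,
    fun x0 => by simp [margX0_mixture, (hP _).2.1 x0, ← sum_mul, hw1],
    FactorsThrough.mixture fun i => (hP i).2.2⟩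

end Mixture

section Convexity

variable {X0 X1 X2 Y ι : Type*} [Fintype X0] [Fintype X1] [Fintype X2] [Fintype Y] [Fintype ι]
  {w : ι → ℝ} {P : ι → X0 × X1 × X2 × Y → ℝ}

theorem sum_mul_HcondY_X0X2_le_mixture (hw : ∀ i, 0 ≤ w i) (hP : ∀ i v, 0 ≤ P i v) :
    ∑ i, w i * HcondY_X0X2 (P i) ≤ HcondY_X0X2 (∑ i, w i • P i) := by
  calc ∑ i, w i * HcondY_X0X2 (P i)
      = -∑ x0, ∑ x2, ∑ y, ∑ i, w i * (margX0X2Y (P i) x0 x2 y *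
          log (margX0X2Y (P i) x0 x2 y / margX0X2 (P i) x0 x2)) := by
        simp [HcondY_X0X2, mul_sum, sum_comm (t := (univ : Finset ι))]
    _ ≤ -∑ x0, ∑ x2, ∑ y, (∑ i, w i * margX0X2Y (P i) x0 x2 y) *
          log ((∑ i, w i * margX0X2Y (P i) x0 x2 y) / ∑ i, w i * margX0X2 (P i) x0 x2) :=
        neg_le_neg <| sum_le_sum fun x0 _ => sum_le_sum fun x2 _ => sum_le_sum fun y _ =>
          sum_mul_log_div_sum_le_of_weights hw (fun i => margX0X2Y_nonneg (hP i) x0 x2 y)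
            (fun i => margX0X2_nonneg (hP i) x0 x2) fun i h =>
              le_antisymm (h ▸ margX0X2Y_le_margX0X2 (hP i) x0 x2 y)
                (margX0X2Y_nonneg (hP i) x0 x2 y)
    _ = HcondY_X0X2 (∑ i, w i • P i) := by
        simp only [HcondY_X0X2, margX0X2Y_mixture, margX0X2_mixture]

theorem mutI_X0X2_mixture_le {ρ : X0 → ℝ} (hw : ∀ i, 0 ≤ w i) (hw1 : ∑ i, w i = 1)
    (hP : ∀ i v, 0 ≤ P i v) (hρ : ∀ i x0, margX0 (P i) x0 = ρ x0) :
    mutI_X0X2 (∑ i, w i • P i) ≤ ∑ i, w i * mutI_X0X2 (P i) := by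
  have hR : ∀ v, 0 ≤ (∑ i, w i • P i) v := fun v => by
    simpa using sum_nonneg fun i _ => mul_nonneg (hw i) (hP i v)
  -- with the `X0`-marginal pinned to `ρ`, the product of marginals is affine in the joint law
  have hprod : ∀ x0 x2, margX0 (∑ i, w i • P i) x0 * margX2 (∑ i, w i • P i) x2 =
      ∑ i, w i * (margX0 (P i) x0 * margX2 (P i) x2) := fun x0 x2 => by
    simp only [margX0_mixture, margX2_mixture, hρ, ← sum_mul, hw1, one_mul, mul_sum]
    exact sum_congr rfl fun i _ => mul_left_comm _ _ _
  calc mutI_X0X2 (∑ i, w i • P i)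
      = ∑ x0, ∑ x2, (∑ i, w i * margX0X2 (P i) x0 x2) * log ((∑ i, w i * margX0X2 (P i) x0 x2) /
          ∑ i, w i * (margX0 (P i) x0 * margX2 (P i) x2)) := by
        simp only [mutI_X0X2_eq_sum_mul_log_div hR, margX0X2_mixture, hprod]
    _ ≤ ∑ x0, ∑ x2, ∑ i, w i * (margX0X2 (P i) x0 x2 *
          log (margX0X2 (P i) x0 x2 / (margX0 (P i) x0 * margX2 (P i) x2))) :=
        sum_le_sum fun x0 _ => sum_le_sum fun x2 _ =>
          sum_mul_log_div_sum_le_of_weights hw (fun i => margX0X2_nonneg (hP i) x0 x2)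
            (fun i => mul_nonneg (margX0_nonneg (hP i) x0) (margX2_nonneg (hP i) x2)) fun i h => by
              rcases mul_eq_zero.mp h with h | h
              · exact le_antisymm (h ▸ margX0X2_le_margX0 (hP i) x0 x2)
                  (margX0X2_nonneg (hP i) x0 x2)
              · exact le_antisymm (h ▸ margX0X2_le_margX2 (hP i) x0 x2)
                  (margX0X2_nonneg (hP i) x0 x2)
    _ = ∑ i, w i * mutI_X0X2 (P i) := by
        simp [mutI_X0X2_eq_sum_mul_log_div (hP _), mul_sum, sum_comm (t := (univ : Finset ι))]

theorem HcondY_X0X1X2_mixture {Γ : X1 → Y → ℝ} (hP : ∀ i, FactorsThrough Γ (P i)) :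
    HcondY_X0X1X2 (∑ i, w i • P i) = ∑ i, w i * HcondY_X0X1X2 (P i) := by
  simp [HcondY_X0X1X2_eq_of_factorsThrough (FactorsThrough.mixture hP),
    HcondY_X0X1X2_eq_of_factorsThrough (hP _), margX0X1X2_mixture, sum_mul, mul_sum,
    sum_comm (t := (univ : Finset ι)), mul_assoc]

theorem Phi_mixture_le {ρ : X0 → ℝ} {Γ : X1 → Y → ℝ} (hw : ∀ i, 0 ≤ w i) (hw1 : ∑ i, w i = 1)
    (hP : ∀ i, IsAdmissible ρ Γ (P i)) :
    Phi (∑ i, w i • P i) ≤ ∑ i, w i * Phi (P i) := by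
  have hI := mutI_X0X2_mixture_le hw hw1 (fun i => (hP i).1.1) fun i => (hP i).2.1
  have hY := sum_mul_HcondY_X0X2_le_mixture hw fun i => (hP i).1.1
  have hYX := HcondY_X0X1X2_mixture (w := w) fun i => (hP i).2.2
  simp only [Phi, condMutI_X1Y_X0X2, mul_sub, sum_sub_distrib] at hYX ⊢
  linarith

end Convexity

theorem phi_time_average_le_general
    {X0 X1 X2 Y : Type*} [Fintype X0] [Fintype X1] [Fintype X2] [Fintype Y]
    (ρ : X0 → ℝ) (Γ : X1 → Y → ℝ)
    (t : ℕ) (ht : 1 ≤ t) (P : Fin t → (X0 × X1 × X2 × Y → ℝ))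
    (hP : ∀ i, IsAdmissible ρ Γ (P i)) :
    IsAdmissible ρ Γ (fun v => (1 / (t : ℝ)) * ∑ i, P i v) ∧
    Phi (fun v => (1 / (t : ℝ)) * ∑ i, P i v) ≤ (1 / (t : ℝ)) * ∑ i, Phi (P i) := by
  have hw : ∀ _ : Fin t, (0 : ℝ) ≤ 1 / t := fun _ => by positivity
  have hw1 : ∑ _ : Fin t, (1 / t : ℝ) = 1 := by
    have ht0 : (t : ℝ) ≠ 0 := by positivity
    simp [ht0]
  have hmix : (fun v => (1 / (t : ℝ)) * ∑ i, P i v) = ∑ i, (1 / (t : ℝ)) • P i := by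
    ext v
    simp [mul_sum]
  rw [hmix, mul_sum]
  exact ⟨IsAdmissible.mixture hw hw1 hP, Phi_mixture_le hw hw1 hP⟩

/-- the time-averaged distribution of `(ρ, Γ)`-admissible distributions
`P_1, …, P_t` is `(ρ, Γ)`-admissible and satisfies `Φ(P̄) ≤ (1/t) ∑ᵢ Φ(Pᵢ)`. -/
theorem phi_time_average_le
    {X0 X1 X2 Y : Type*} [Fintype X0] [Fintype X1] [Fintype X2] [Fintype Y]
    (ρ : X0 → ℝ) (hρ : IsPmf ρ) (Γ : X1 → Y → ℝ) (hΓ : IsChannel Γ)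
    (t : ℕ) (ht : 1 ≤ t) (P : Fin t → (X0 × X1 × X2 × Y → ℝ))
    (hP : ∀ i, IsAdmissible ρ Γ (P i)) :
    IsAdmissible ρ Γ (fun v => (1 / (t : ℝ)) * ∑ i, P i v) ∧
    Phi (fun v => (1 / (t : ℝ)) * ∑ i, P i v) ≤ (1 / (t : ℝ)) * ∑ i, Phi (P i) :=
  phi_time_average_le_general ρ Γ t ht P hP
end

section
/- (Converse inequality for Theorem 1) Let t ≥ 1 and let (X0_i, X1_i, X2_i, Y_i) for i = 1, …, t be random variables on a probability space, each taking values in a finite set, such that: (i) X0_1, …, X0_t are mutually independent; (ii) the channel is memoryless in the sense that H(Y_1,…,Y_t | X0_1,…,X0_t, X1_1,…,X1_t, X2_1,…,X2_t) = ∑_{i=1}^t H(Y_i | X0_i, X1_i, X2_i); (iii) for every i there is a (deterministic) function f_i with X2_i = f_i(X0_1,…,X0_{i−1}, Y_1,…,Y_{i−1}, X2_1,…,X2_{i−1}) almost surely (for i = 1, X2_1 is almost surely constant). Then ∑_{i=1}^t I(X0_i ; X2_i) ≤ ∑_{i=1}^t I(X1_i ; Y_i | X0_i, X2_i). -/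
open scoped BigOperators
open MeasureTheory

/-- Shannon entropy (natural log) of a random variable with values in a finite set,
with the convention `0 log 0 = 0` (which holds since `Real.log 0 = 0`). -/
noncomputable def entH {Ω : Type*} [MeasurableSpace Ω] (μ : Measure Ω)
    {S : Type*} [Fintype S] (X : Ω → S) : ℝ :=
  -∑ s, (μ (X ⁻¹' {s})).toReal * Real.log ((μ (X ⁻¹' {s})).toReal)

noncomputable def condH {Ω : Type*} [MeasurableSpace Ω] (μ : Measure Ω)
    {S T : Type*} [Fintype S] [Fintype T] (U : Ω → S) (V : Ω → T) : ℝ :=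
  entH μ (fun ω => (U ω, V ω)) - entH μ V

noncomputable def mutI {Ω : Type*} [MeasurableSpace Ω] (μ : Measure Ω)
    {S T : Type*} [Fintype S] [Fintype T] (U : Ω → S) (V : Ω → T) : ℝ :=
  entH μ U + entH μ V - entH μ (fun ω => (U ω, V ω))

noncomputable def condMI {Ω : Type*} [MeasurableSpace Ω] (μ : Measure Ω)
    {S T R : Type*} [Fintype S] [Fintype T] [Fintype R]
    (U : Ω → S) (V : Ω → T) (W : Ω → R) : ℝ :=
  entH μ (fun ω => (U ω, W ω)) + entH μ (fun ω => (V ω, W ω))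
    - entH μ (fun ω => (U ω, V ω, W ω)) - entH μ W

/-!
First replace `X2` by an a.s. equal process that is a causal function of `(X0, Y)` alone. With
`A k = (X0_j)_{j<k}`, `B l = (Y_j)_{j<l}` and `E k l = H(A k, B l)`, data processing gives
`I(X0_i ; X2_i) ≤ H(X0_i) - H(X0_i | A i, B i)`, and independence makes `∑ H(X0_i) = E t 0 - E 0 0`.
A Csiszár-type telescoping turns the resulting sum into
`∑ [H(Y_i | A (i+1), B i) - H(Y_i | A t, B i)]`. The first term is at most `H(Y_i | X0_i, X2_i)`
because `X2_i` is determined by the past; the second is at least `H(Y_i | X0^t, X1^t, X2^t, B i)`,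
and by the chain rule and memorylessness these sum to `∑ H(Y_i | X0_i, X1_i, X2_i)`. Every
entropy inequality used is an instance of submodularity, i.e. of Gibbs' inequality.
-/

open Finset Filter Real

section MeasurableFibers

variable {Ω : Type*} [MeasurableSpace Ω] {S T : Type*}

def MeasurableFibers (X : Ω → S) : Prop := ∀ s, MeasurableSet (X ⁻¹' {s})

lemma MeasurableFibers.prodMk {U : Ω → S} {V : Ω → T} (hU : MeasurableFibers U)
    (hV : MeasurableFibers V) : MeasurableFibers (fun ω => (U ω, V ω)) := fun x => by
  convert (hU x.1).inter (hV x.2) using 1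
  ext ω; simp [Prod.ext_iff]

lemma MeasurableFibers.comp [Countable S] {X : Ω → S} (hX : MeasurableFibers X) (f : S → T) :
    MeasurableFibers (fun ω => f (X ω)) := fun t => by
  convert MeasurableSet.biUnion (Set.to_countable (f ⁻¹' {t})) fun s _ => hX s using 1
  ext ω; simp

lemma measurableFibers_pi {ι : Type*} [Countable ι] {S : ι → Type*} {X : (i : ι) → Ω → S i}
    (hX : ∀ i, MeasurableFibers (X i)) : MeasurableFibers (fun ω i => X i ω) := fun s => by
  convert MeasurableSet.iInter fun i => hX i (s i) using 1
  ext ω; simp [funext_iff]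

end MeasurableFibers

section Entropy

variable {Ω : Type*} [MeasurableSpace Ω] {μ : Measure Ω} {S T R : Type*}

lemma exists_eq_of_negMulLog_measureReal_ne_zero {X : Ω → S} {s : S}
    (h : negMulLog (μ.real (X ⁻¹' {s})) ≠ 0) : ∃ ω, X ω = s := by
  by_contra! hempty
  exact h (by simp [Set.preimage_singleton_eq_empty.2 fun ⟨ω, hω⟩ => hempty ω hω])

variable [Fintype S]

lemma measureReal_comp_preimage_singleton [IsFiniteMeasure μ] [DecidableEq T] {X : Ω → S}
    (hX : MeasurableFibers X) (f : S → T) (t : T) :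
    μ.real ((fun ω => f (X ω)) ⁻¹' {t}) = ∑ s with f s = t, μ.real (X ⁻¹' {s}) := by
  rw [sum_measureReal_preimage_singleton _ fun s _ => hX s]
  congr 1; ext ω; simp

lemma sum_measureReal_preimage_singleton_eq_one [IsProbabilityMeasure μ] {X : Ω → S}
    (hX : MeasurableFibers X) : ∑ s, μ.real (X ⁻¹' {s}) = 1 := by
  rw [sum_measureReal_preimage_singleton _ fun s _ => hX s]
  simp

lemma entH_eq_neg_sum (X : Ω → S) :
    entH μ X = -∑ s, μ.real (X ⁻¹' {s}) * log (μ.real (X ⁻¹' {s})) := rfl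

lemma entH_eq_sum_negMulLog (X : Ω → S) : entH μ X = ∑ s, negMulLog (μ.real (X ⁻¹' {s})) := by
  simp [entH_eq_neg_sum, negMulLog]

lemma entH_congr_ae {U V : Ω → S} (h : U =ᵐ[μ] V) : entH μ U = entH μ V := by
  simp only [entH_eq_sum_negMulLog]
  refine sum_congr rfl fun s _ => ?_
  rw [measureReal_congr (h.preimage {s})]

lemma entH_const [IsProbabilityMeasure μ] (s : S) : entH μ (fun _ : Ω => s) = 0 := by
  classical
  rw [entH_eq_sum_negMulLog, sum_eq_single s (fun s' _ hs' => by simp [hs'.symm])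
    (by simp)]
  simp

variable [Fintype T] [Fintype R]

lemma entH_comp_eq_neg_sum [IsFiniteMeasure μ] {X : Ω → S} (hX : MeasurableFibers X)
    (f : S → T) : entH μ (fun ω => f (X ω)) =
      -∑ s, μ.real (X ⁻¹' {s}) * log (μ.real ((fun ω => f (X ω)) ⁻¹' {f s})) := by
  classical
  rw [entH_eq_neg_sum, ← sum_fiberwise univ f]
  congr 1
  refine sum_congr rfl fun t _ => ?_
  rw [measureReal_comp_preimage_singleton hX f t, sum_mul]
  refine sum_congr rfl fun s hs => ?_
  rw [(mem_filter.1 hs).2, measureReal_comp_preimage_singleton hX f t]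

lemma sum_measureReal_prodMk_preimage_singleton [IsFiniteMeasure μ] {U : Ω → S} {W : Ω → T}
    (h : MeasurableFibers (fun ω => (U ω, W ω))) (w : T) :
    ∑ u, μ.real ((fun ω => (U ω, W ω)) ⁻¹' {(u, w)}) = μ.real (W ⁻¹' {w}) := by
  classical
  have := measureReal_comp_preimage_singleton (μ := μ) h Prod.snd w
  simp only at this
  rw [this, sum_filter, Fintype.sum_prod_type]
  simp

lemma sub_le_mul_log_div {p r : ℝ} (hp : 0 ≤ p) (hr : 0 < r) : p - r ≤ p * log (p / r) :=
  calc p - r = r * (p / r - 1) := by field_simp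
    _ ≤ r * (p / r * log (p / r)) := by gcongr; exact self_sub_one_le_mul_log (by positivity)
    _ = p * log (p / r) := by field_simp

lemma entH_submodular [IsProbabilityMeasure μ] {U : Ω → S} {V : Ω → T} {W : Ω → R}
    (hU : MeasurableFibers U) (hV : MeasurableFibers V) (hW : MeasurableFibers W) :
    entH μ (fun ω => (U ω, V ω, W ω)) + entH μ W ≤
      entH μ (fun ω => (U ω, W ω)) + entH μ (fun ω => (V ω, W ω)) := by
  set X := fun ω => (U ω, V ω, W ω)
  have hX : MeasurableFibers X := hU.prodMk (hV.prodMk hW)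
  set p := fun x => μ.real (X ⁻¹' {x})
  set a := fun x : S × T × R => μ.real ((fun ω => (U ω, W ω)) ⁻¹' {(x.1, x.2.2)})
  set b := fun x : S × T × R => μ.real ((fun ω => (V ω, W ω)) ⁻¹' {(x.2.1, x.2.2)})
  set c := fun x : S × T × R => μ.real (W ⁻¹' {x.2.2})
  have hUW : entH μ (fun ω => (U ω, W ω)) = -∑ x, p x * log (a x) :=
    entH_comp_eq_neg_sum hX fun x => (x.1, x.2.2)
  have hVW : entH μ (fun ω => (V ω, W ω)) = -∑ x, p x * log (b x) :=
    entH_comp_eq_neg_sum hX fun x => (x.2.1, x.2.2)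
  have hW' : entH μ W = -∑ x, p x * log (c x) := entH_comp_eq_neg_sum hX fun x => x.2.2
  have hpa : ∀ x, p x ≤ a x := fun x =>
    measureReal_mono fun ω (h : X ω = x) => by simp [← h, X]
  have hpb : ∀ x, p x ≤ b x := fun x =>
    measureReal_mono fun ω (h : X ω = x) => by simp [← h, X]
  have hac : ∀ x, a x ≤ c x := fun x =>
    measureReal_mono fun ω (h : (U ω, W ω) = (x.1, x.2.2)) => congrArg Prod.snd h
  have hsum : ∑ x, a x * b x / c x = 1 := by
    calc ∑ x, a x * b x / c x
        = ∑ w, (∑ u, μ.real ((fun ω => (U ω, W ω)) ⁻¹' {(u, w)})) *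
            (∑ v, μ.real ((fun ω => (V ω, W ω)) ⁻¹' {(v, w)})) / μ.real (W ⁻¹' {w}) := by
          simp only [Fintype.sum_prod_type, sum_mul_sum, sum_div, a, b, c]
          exact (sum_congr rfl fun _ _ => sum_comm).trans sum_comm
      _ = ∑ w, μ.real (W ⁻¹' {w}) := by
          simp only [sum_measureReal_prodMk_preimage_singleton (hU.prodMk hW),
            sum_measureReal_prodMk_preimage_singleton (hV.prodMk hW), mul_self_div_self]
      _ = 1 := sum_measureReal_preimage_singleton_eq_one hW
  -- Gibbs: termwise `p log (p / r) ≥ p - r` for `r = a b / c`, and the `r x` sum to `1`.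
  have key : ∀ x, p x - a x * b x / c x ≤
      p x * (log (p x) + log (c x) - log (a x) - log (b x)) := by
    intro x
    have hp0 : 0 ≤ p x := measureReal_nonneg
    rcases hp0.eq_or_lt with hp | hp
    · rw [← hp, zero_sub, zero_mul, neg_nonpos]
      exact div_nonneg (mul_nonneg measureReal_nonneg measureReal_nonneg) measureReal_nonneg
    have ha := hp.trans_le (hpa x)
    have hb := hp.trans_le (hpb x)
    have hc := ha.trans_le (hac x)
    have : log (p x) + log (c x) - log (a x) - log (b x) = log (p x / (a x * b x / c x)) := by
      rw [log_div hp.ne' (by positivity), log_div (by positivity) hc.ne',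
        log_mul ha.ne' hb.ne']
      ring
    rw [this]
    exact sub_le_mul_log_div hp.le (by positivity)
  have := sum_le_sum fun x (_ : x ∈ univ) => key x
  rw [sum_sub_distrib, sum_measureReal_preimage_singleton_eq_one hX, hsum] at this
  simp only [mul_add, mul_sub, sum_add_distrib, sum_sub_distrib] at this
  rw [entH_eq_neg_sum X, hUW, hVW, hW']
  linarith

lemma entH_congr_of_fibers {U : Ω → S} {V : Ω → T} (h : ∀ ω ω', U ω = U ω' ↔ V ω = V ω') :
    entH μ U = entH μ V := by
  have hfib : ∀ ω, U ⁻¹' {U ω} = V ⁻¹' {V ω} := fun ω => by ext ω'; exact h ω' ω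
  simp only [entH_eq_sum_negMulLog]
  refine sum_bij_ne_zero (fun s _ hs => V (exists_eq_of_negMulLog_measureReal_ne_zero hs).choose)
    (fun _ _ _ => mem_univ _) (fun s₁ _ hs₁ s₂ _ hs₂ heq => ?_) (fun t _ ht => ?_)
    (fun s _ hs => ?_)
  · rw [← (exists_eq_of_negMulLog_measureReal_ne_zero hs₁).choose_spec,
      ← (exists_eq_of_negMulLog_measureReal_ne_zero hs₂).choose_spec]
    exact (h _ _).2 heq
  · obtain ⟨ω, rfl⟩ := exists_eq_of_negMulLog_measureReal_ne_zero ht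
    have hs : negMulLog (μ.real (U ⁻¹' {U ω})) ≠ 0 := by rwa [hfib]
    exact ⟨U ω, mem_univ _, hs,
      (h _ _).1 (exists_eq_of_negMulLog_measureReal_ne_zero hs).choose_spec⟩
  · rw [← hfib, (exists_eq_of_negMulLog_measureReal_ne_zero hs).choose_spec]

lemma entH_eq_zero_of_forall_eq [IsProbabilityMeasure μ] {X : Ω → S}
    (h : ∀ ω ω', X ω = X ω') : entH μ X = 0 :=
  (entH_congr_of_fibers (V := fun _ => ()) fun ω ω' => iff_of_true (h ω ω') rfl).trans
    (entH_const ())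

lemma condH_congr_of_fibers {U : Ω → R} {V : Ω → S} {V' : Ω → T}
    (h : ∀ ω ω', V ω = V ω' ↔ V' ω = V' ω') : condH μ U V = condH μ U V' := by
  unfold condH
  rw [entH_congr_of_fibers h, entH_congr_of_fibers (V := fun ω => (U ω, V' ω)) fun ω ω' => by
    simp only [Prod.mk.injEq, h]]

lemma condH_le_of_determined [IsProbabilityMeasure μ] {Y : Ω → R} {W : Ω → S} {V : Ω → T}
    (hY : MeasurableFibers Y) (hW : MeasurableFibers W) (hV : MeasurableFibers V)
    (hWV : ∀ ω ω', W ω = W ω' → V ω = V ω') : condH μ Y W ≤ condH μ Y V := by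
  have := entH_submodular (μ := μ) hY hW hV
  have hYWV : entH μ (fun ω => (Y ω, W ω, V ω)) = entH μ (fun ω => (Y ω, W ω)) :=
    entH_congr_of_fibers fun ω ω' => by
      simp only [Prod.mk.injEq]
      exact ⟨fun h => ⟨h.1, h.2.1⟩, fun h => ⟨h.1, h.2, hWV _ _ h.2⟩⟩
  have hWV' : entH μ (fun ω => (W ω, V ω)) = entH μ W :=
    entH_congr_of_fibers fun ω ω' => by
      simp only [Prod.mk.injEq]
      exact ⟨fun h => h.1, fun h => ⟨h, hWV _ _ h⟩⟩
  unfold condH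
  linarith

lemma mutI_eq_entH_sub_condH (U : Ω → S) (V : Ω → T) :
    mutI μ U V = entH μ U - condH μ U V := by
  unfold mutI condH; ring

lemma condMI_eq_condH_sub_condH (U : Ω → S) (V : Ω → T) (W : Ω → R) :
    condMI μ U V W = condH μ V W - condH μ V (fun ω => (U ω, W ω)) := by
  unfold condMI condH
  rw [entH_congr_of_fibers (U := fun ω => (U ω, V ω, W ω)) (V := fun ω => (V ω, U ω, W ω))
    fun ω ω' => by simp only [Prod.mk.injEq]; tauto]
  ring

lemma condH_congr_ae_right (U : Ω → R) {V V' : Ω → S} (h : V =ᵐ[μ] V') :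
    condH μ U V = condH μ U V' := by
  unfold condH
  rw [entH_congr_ae h, entH_congr_ae (EventuallyEq.rfl.prodMk h)]

lemma mutI_congr_ae_right (U : Ω → R) {V V' : Ω → S} (h : V =ᵐ[μ] V') :
    mutI μ U V = mutI μ U V' := by
  unfold mutI
  rw [entH_congr_ae h, entH_congr_ae (EventuallyEq.rfl.prodMk h)]

lemma condMI_congr_ae_right (U : Ω → R) (V : Ω → T) {W W' : Ω → S} (h : W =ᵐ[μ] W') :
    condMI μ U V W = condMI μ U V W' := by
  unfold condMI
  rw [entH_congr_ae h, entH_congr_ae (EventuallyEq.rfl.prodMk h),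
    entH_congr_ae (EventuallyEq.rfl.prodMk h),
    entH_congr_ae (EventuallyEq.rfl.prodMk (EventuallyEq.rfl.prodMk h))]

lemma entH_pi_eq_sum_of_indep [IsProbabilityMeasure μ] {ι : Type*} [Fintype ι] [DecidableEq ι]
    {S : ι → Type*} [∀ i, Fintype (S i)] {X : (i : ι) → Ω → S i}
    (hX : ∀ i, MeasurableFibers (X i))
    (hindep : ∀ s : (i : ι) → S i, μ (⋂ i, X i ⁻¹' {s i}) = ∏ i, μ (X i ⁻¹' {s i})) :
    entH μ (fun ω i => X i ω) = ∑ i, entH μ (X i) := by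
  set Z := fun ω i => X i ω
  have hprod : ∀ s, μ.real (Z ⁻¹' {s}) = ∏ i, μ.real (X i ⁻¹' {s i}) := fun s => by
    have : Z ⁻¹' {s} = ⋂ i, X i ⁻¹' {s i} := by ext ω; simp [Z, funext_iff]
    rw [measureReal_def, this, hindep, ENNReal.toReal_prod]
    rfl
  have hmarg : ∀ i, entH μ (X i) =
      -∑ s, μ.real (Z ⁻¹' {s}) * log (μ.real (X i ⁻¹' {s i})) := fun i =>
    entH_comp_eq_neg_sum (measurableFibers_pi hX) fun s => s i
  rw [entH_eq_neg_sum, sum_congr rfl fun i _ => hmarg i, sum_neg_distrib, sum_comm]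
  congr 1
  refine sum_congr rfl fun s _ => ?_
  rw [← mul_sum]
  by_cases h0 : μ.real (Z ⁻¹' {s}) = 0
  · simp [h0]
  · rw [hprod, log_prod (f := fun i => μ.real (X i ⁻¹' {s i})) fun i _ =>
      prod_ne_zero_iff.1 (hprod s ▸ h0) i (mem_univ i)]

end Entropy

section Past

variable {Ω : Type*} {t : ℕ} {S : Fin t → Type*} {X : (i : Fin t) → Ω → S i} {ω ω' : Ω}

/-- With `0`-based indices, `past X i` is the paper's `X^{i-1} = (X_1, …, X_{i-1})`. -/
def past (X : (i : Fin t) → Ω → S i) (k : ℕ) (ω : Ω) : (j : {j : Fin t // (j : ℕ) < k}) → S j :=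
  fun j => X j ω

lemma past_eq_past_iff {k : ℕ} :
    past X k ω = past X k ω' ↔ ∀ j : Fin t, (j : ℕ) < k → X j ω = X j ω' := by
  simp [past, funext_iff]

lemma past_succ_eq_past_succ_iff (i : Fin t) :
    past X (i + 1) ω = past X (i + 1) ω' ↔ X i ω = X i ω' ∧ past X i ω = past X i ω' := by
  simp only [past_eq_past_iff]
  refine ⟨fun h => ⟨h i (Nat.lt_succ_self _), fun j hj => h j (Nat.lt_succ_of_lt hj)⟩,
    fun h j hj => ?_⟩
  rcases (Nat.lt_succ_iff.1 hj).lt_or_eq with hj | hj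
  · exact h.2 j hj
  · exact Fin.ext hj ▸ h.1

lemma past_length_eq_past_length_iff :
    past X t ω = past X t ω' ↔ (fun i => X i ω) = (fun i => X i ω') := by
  rw [past_eq_past_iff, funext_iff]
  simp

lemma past_zero_eq_past_zero : past X 0 ω = past X 0 ω' :=
  past_eq_past_iff.2 fun _ hj => absurd hj (Nat.not_lt_zero _)

lemma measurableFibers_past [MeasurableSpace Ω] (hX : ∀ i, MeasurableFibers (X i)) (k : ℕ) :
    MeasurableFibers (past X k) :=
  measurableFibers_pi fun j => hX j

variable [MeasurableSpace Ω] {μ : Measure Ω} [∀ i, Fintype (S i)] {T : Type*} [Fintype T]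

lemma entH_past_succ_prod_sub (i : Fin t) (V : Ω → T) :
    entH μ (fun ω => (past X (i + 1) ω, V ω)) - entH μ (fun ω => (past X i ω, V ω)) =
      condH μ (X i) (fun ω => (past X i ω, V ω)) :=
  congrArg (· - _) <| entH_congr_of_fibers fun ω ω' => by
    simp only [Prod.mk.injEq, past_succ_eq_past_succ_iff]
    tauto

lemma entH_prod_past_succ_sub (W : Ω → T) (i : Fin t) :
    entH μ (fun ω => (W ω, past X (i + 1) ω)) - entH μ (fun ω => (W ω, past X i ω)) =
      condH μ (X i) (fun ω => (W ω, past X i ω)) :=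
  congrArg (· - _) <| entH_congr_of_fibers fun ω ω' => by
    simp only [Prod.mk.injEq, past_succ_eq_past_succ_iff]
    tauto

/-- The chain rule for `H(X^t | W)`. -/
lemma sum_entH_prod_past_succ_sub (W : Ω → T) :
    ∑ i : Fin t, (entH μ (fun ω => (W ω, past X (i + 1) ω)) -
      entH μ (fun ω => (W ω, past X i ω))) = condH μ (fun ω i => X i ω) W := by
  rw [Fin.sum_univ_eq_sum_range (fun k => entH μ (fun ω => (W ω, past X (k + 1) ω)) -
    entH μ (fun ω => (W ω, past X k ω))),
    sum_range_sub (fun k => entH μ (fun ω => (W ω, past X k ω)))]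
  refine congrArg₂ (· - ·) (entH_congr_of_fibers fun ω ω' => ?_)
    (entH_congr_of_fibers fun ω ω' => ?_)
  · rw [Prod.mk.injEq, Prod.mk.injEq, past_length_eq_past_length_iff, and_comm]
  · rw [Prod.mk.injEq, and_iff_left past_zero_eq_past_zero]

end Past

/-- The telescoping identity behind the Csiszár sum identity, for `E k l = H(X^k, Y^l)`. -/
lemma csiszar_sum_identity (E : ℕ → ℕ → ℝ) (t : ℕ) :
    (E t 0 - E 0 0) - ∑ i : Fin t, (E (i + 1) i - E i i) =
      ∑ i : Fin t, ((E (i + 1) (i + 1) - E (i + 1) i) - (E t (i + 1) - E t i)) := by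
  have hdiag := sum_range_sub (fun k => E k k) t
  have hrow := sum_range_sub (fun k => E t k) t
  rw [← Fin.sum_univ_eq_sum_range (fun k => E (k + 1) (k + 1) - E k k)] at hdiag
  rw [← Fin.sum_univ_eq_sum_range (fun k => E t (k + 1) - E t k)] at hrow
  simp only [sum_sub_distrib] at hdiag hrow ⊢
  linarith

theorem exists_causal_ae_eq_of_causal_ae_eq {Ω : Type*} [MeasurableSpace Ω] {μ : Measure Ω}
    {ι : Type*} [LinearOrder ι] [WellFoundedLT ι] [Countable ι] {A B C : ι → Type*}
    [∀ i, Nonempty (C i)] {X : (i : ι) → Ω → A i} {Y : (i : ι) → Ω → B i}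
    {Z : (i : ι) → Ω → C i}
    (h : ∀ i, ∃ f : ((j : ι) → A j) → ((j : ι) → B j) → ((j : ι) → C j) → C i,
      (∀ a a' b b' c c', (∀ j, j < i → a j = a' j) → (∀ j, j < i → b j = b' j) →
        (∀ j, j < i → c j = c' j) → f a b c = f a' b' c') ∧
      (∀ᵐ ω ∂μ, Z i ω = f (fun j => X j ω) (fun j => Y j ω) (fun j => Z j ω))) (i : ι) :
    ∃ g : ((j : ι) → A j) → ((j : ι) → B j) → C i,
      (∀ a a' b b', (∀ j, j < i → a j = a' j) → (∀ j, j < i → b j = b' j) → g a b = g a' b') ∧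
      (∀ᵐ ω ∂μ, Z i ω = g (fun j => X j ω) (fun j => Y j ω)) := by
  classical
  induction i using WellFoundedLT.induction with
  | _ i ih =>
  choose G hGcausal hGae using ih
  obtain ⟨f, hfcausal, hfae⟩ := h i
  let pastZ : ((j : ι) → A j) → ((j : ι) → B j) → (j : ι) → C j := fun a b j =>
    if hj : j < i then G j hj a b else Classical.arbitrary _
  refine ⟨fun a b => f a b (pastZ a b), fun a a' b b' ha hb => ?_, ?_⟩
  · refine hfcausal _ _ _ _ _ _ ha hb fun j hj => ?_
    simp only [pastZ, dif_pos hj]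
    exact hGcausal j hj a a' b b' (fun k hk => ha k (hk.trans hj)) fun k hk => hb k (hk.trans hj)
  · have hpast : ∀ᵐ ω ∂μ, ∀ j (hj : j < i),
        Z j ω = G j hj (fun k => X k ω) (fun k => Y k ω) := by
      refine ae_all_iff.2 fun j => ?_
      by_cases hj : j < i
      · filter_upwards [hGae j hj] with ω hω _ using hω
      · exact ae_of_all _ fun ω hj' => absurd hj' hj
    filter_upwards [hfae, hpast] with ω hω hpastω
    rw [hω]
    refine hfcausal _ _ _ _ _ _ (fun _ _ => rfl) (fun _ _ => rfl) fun j hj => ?_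
    simp only [pastZ, dif_pos hj]
    exact hpastω j hj

theorem sum_mutI_le_sum_condMI_of_determined {Ω : Type*} [MeasurableSpace Ω] (μ : Measure Ω)
    [IsProbabilityMeasure μ] {t : ℕ} {S0 S1 S2 SY : Fin t → Type*}
    [∀ i, Fintype (S0 i)] [∀ i, Fintype (S1 i)] [∀ i, Fintype (S2 i)] [∀ i, Fintype (SY i)]
    {X0 : (i : Fin t) → Ω → S0 i} {X1 : (i : Fin t) → Ω → S1 i}
    {X2 : (i : Fin t) → Ω → S2 i} {Y : (i : Fin t) → Ω → SY i}
    (hm0 : ∀ i, MeasurableFibers (X0 i)) (hm1 : ∀ i, MeasurableFibers (X1 i))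
    (hm2 : ∀ i, MeasurableFibers (X2 i)) (hmY : ∀ i, MeasurableFibers (Y i))
    (hindep : ∀ s : (i : Fin t) → S0 i,
      μ (⋂ i, X0 i ⁻¹' {s i}) = ∏ i, μ (X0 i ⁻¹' {s i}))
    (hmemoryless : condH μ (fun ω => fun i => Y i ω)
        (fun ω => ((fun i => X0 i ω), (fun i => X1 i ω), (fun i => X2 i ω))) =
      ∑ i, condH μ (Y i) (fun ω => (X0 i ω, X1 i ω, X2 i ω)))
    (hdet : ∀ (i : Fin t) ω ω', past X0 i ω = past X0 i ω' → past Y i ω = past Y i ω' →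
      X2 i ω = X2 i ω') :
    ∑ i, mutI μ (X0 i) (X2 i) ≤ ∑ i, condMI μ (X1 i) (Y i) (fun ω => (X0 i ω, X2 i ω)) := by
  set A := past X0
  set B := past Y
  have hA := measurableFibers_past hm0
  have hB := measurableFibers_past hmY
  set X := fun ω => ((fun i => X0 i ω), (fun i => X1 i ω), (fun i => X2 i ω))
  have hX : MeasurableFibers X := (measurableFibers_pi hm0).prodMk
    ((measurableFibers_pi hm1).prodMk (measurableFibers_pi hm2))
  set E : ℕ → ℕ → ℝ := fun k l => entH μ (fun ω => (A k ω, B l ω))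
  set F : ℕ → ℝ := fun l => entH μ (fun ω => (X ω, B l ω))
  have hX0_sum : ∑ i, entH μ (X0 i) = E t 0 - E 0 0 := by
    have hE00 : E 0 0 = 0 := entH_eq_zero_of_forall_eq fun ω ω' =>
      Prod.ext past_zero_eq_past_zero past_zero_eq_past_zero
    rw [← entH_pi_eq_sum_of_indep hm0 hindep, hE00, sub_zero]
    exact entH_congr_of_fibers fun ω ω' => by
      rw [Prod.mk.injEq, past_length_eq_past_length_iff, and_iff_left past_zero_eq_past_zero]
  have hmutI : ∀ i : Fin t, mutI μ (X0 i) (X2 i) ≤ entH μ (X0 i) - (E (i + 1) i - E i i) :=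
    fun i => by
      rw [mutI_eq_entH_sub_condH, entH_past_succ_prod_sub]
      exact sub_le_sub_left (condH_le_of_determined (hm0 i) ((hA i).prodMk (hB i)) (hm2 i)
        fun ω ω' h => hdet i ω ω' (Prod.ext_iff.1 h).1 (Prod.ext_iff.1 h).2) _
  have hY_upper : ∀ i : Fin t,
      E (i + 1) (i + 1) - E (i + 1) i ≤ condH μ (Y i) (fun ω => (X0 i ω, X2 i ω)) := fun i => by
    rw [entH_prod_past_succ_sub]
    refine condH_le_of_determined (hmY i) ((hA _).prodMk (hB i)) ((hm0 i).prodMk (hm2 i))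
      fun ω ω' h => ?_
    obtain ⟨hA', hB'⟩ := Prod.ext_iff.1 h
    obtain ⟨hAi, hA'⟩ := (past_succ_eq_past_succ_iff i).1 hA'
    exact Prod.ext hAi (hdet i ω ω' hA' hB')
  have hY_lower : ∀ i : Fin t, F (i + 1) - F i ≤ E t (i + 1) - E t i := fun i => by
    rw [entH_prod_past_succ_sub, entH_prod_past_succ_sub]
    refine condH_le_of_determined (hmY i) (hX.prodMk (hB i)) ((hA t).prodMk (hB i))
      fun ω ω' h => ?_
    obtain ⟨hX', hB'⟩ := Prod.ext_iff.1 h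
    exact Prod.ext (past_length_eq_past_length_iff.2 (Prod.ext_iff.1 hX').1) hB'
  have hchain : ∑ i : Fin t, (F (i + 1) - F i) =
      ∑ i, condH μ (Y i) (fun ω => (X0 i ω, X1 i ω, X2 i ω)) :=
    (sum_entH_prod_past_succ_sub X).trans hmemoryless
  calc ∑ i, mutI μ (X0 i) (X2 i)
      ≤ ∑ i : Fin t, (entH μ (X0 i) - (E (i + 1) i - E i i)) := sum_le_sum fun i _ => hmutI i
    _ = ∑ i : Fin t, ((E (i + 1) (i + 1) - E (i + 1) i) - (E t (i + 1) - E t i)) := by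
      rw [sum_sub_distrib, hX0_sum, csiszar_sum_identity]
    _ ≤ ∑ i : Fin t, (condH μ (Y i) (fun ω => (X0 i ω, X2 i ω)) - (F (i + 1) - F i)) :=
      sum_le_sum fun i _ => sub_le_sub (hY_upper i) (hY_lower i)
    _ = ∑ i, condMI μ (X1 i) (Y i) (fun ω => (X0 i ω, X2 i ω)) := by
      rw [sum_sub_distrib, hchain, ← sum_sub_distrib]
      refine sum_congr rfl fun i _ => ?_
      rw [condMI_eq_condH_sub_condH]
      exact congrArg (_ - ·) (condH_congr_of_fibers fun ω ω' => by simp only [Prod.mk.injEq]; tauto)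

theorem converse_information_constraint_general
    {Ω : Type*} [MeasurableSpace Ω] (μ : Measure Ω) [IsProbabilityMeasure μ]
    (t : ℕ)
    (S0 S1 S2 SY : Fin t → Type*)
    [∀ i, Fintype (S0 i)] [∀ i, Fintype (S1 i)] [∀ i, Fintype (S2 i)] [∀ i, Fintype (SY i)]
    (X0 : (i : Fin t) → Ω → S0 i) (X1 : (i : Fin t) → Ω → S1 i)
    (X2 : (i : Fin t) → Ω → S2 i) (Y : (i : Fin t) → Ω → SY i)
    (hm0 : ∀ i s, MeasurableSet (X0 i ⁻¹' {s}))
    (hm1 : ∀ i s, MeasurableSet (X1 i ⁻¹' {s}))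
    (hmY : ∀ i s, MeasurableSet (Y i ⁻¹' {s}))
    (hindep : ∀ s : (i : Fin t) → S0 i,
      μ (⋂ i, X0 i ⁻¹' {s i}) = ∏ i, μ (X0 i ⁻¹' {s i}))
    (hmemoryless : condH μ (fun ω => fun i => Y i ω)
        (fun ω => ((fun i => X0 i ω), (fun i => X1 i ω), (fun i => X2 i ω))) =
      ∑ i, condH μ (Y i) (fun ω => (X0 i ω, X1 i ω, X2 i ω)))
    (hdet : ∀ i, ∃ f : ((j : Fin t) → S0 j) → ((j : Fin t) → SY j) →
        ((j : Fin t) → S2 j) → S2 i,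
      (∀ a a' b b' c c', (∀ j, j < i → a j = a' j) → (∀ j, j < i → b j = b' j) →
        (∀ j, j < i → c j = c' j) → f a b c = f a' b' c') ∧
      (∀ᵐ ω ∂μ, X2 i ω = f (fun j => X0 j ω) (fun j => Y j ω) (fun j => X2 j ω))) :
    ∑ i, mutI μ (X0 i) (X2 i) ≤
      ∑ i, condMI μ (X1 i) (Y i) (fun ω => (X0 i ω, X2 i ω)) := by
  have : ∀ i, Nonempty (S2 i) := fun i => ⟨X2 i (nonempty_of_isProbabilityMeasure μ).some⟩
  choose G hGcausal hGae using exists_causal_ae_eq_of_causal_ae_eq hdet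
  set X2' : (i : Fin t) → Ω → S2 i := fun i ω => G i (fun j => X0 j ω) (fun j => Y j ω)
  have hX2 : (fun ω i => X2 i ω) =ᵐ[μ] fun ω i => X2' i ω := by
    filter_upwards [ae_all_iff.2 hGae] with ω hω using funext hω
  have hm2' : ∀ i, MeasurableFibers (X2' i) := fun i =>
    ((measurableFibers_pi hm0).prodMk (measurableFibers_pi hmY)).comp fun ab => G i ab.1 ab.2
  have hdet' : ∀ (i : Fin t) ω ω', past X0 i ω = past X0 i ω' → past Y i ω = past Y i ω' →
      X2' i ω = X2' i ω' := fun i ω ω' h0 hY =>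
    hGcausal i _ _ _ _ (past_eq_past_iff.1 h0) (past_eq_past_iff.1 hY)
  rw [condH_congr_ae_right _ (EventuallyEq.rfl.prodMk (EventuallyEq.rfl.prodMk hX2)),
    sum_congr rfl fun i _ => condH_congr_ae_right _
      (EventuallyEq.rfl.prodMk (EventuallyEq.rfl.prodMk (hGae i)))] at hmemoryless
  rw [sum_congr rfl fun i _ => mutI_congr_ae_right _ (hGae i),
    sum_congr rfl fun i _ => condMI_congr_ae_right _ _ (EventuallyEq.rfl.prodMk (hGae i))]
  exact sum_mutI_le_sum_condMI_of_determined μ hm0 hm1 hm2' hmY hindep hmemoryless hdet'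

/-- converse inequality for Theorem 1: if (i) `X0_1, …, X0_t` are mutually
independent, (ii) the channel is memoryless in the sense that
`H(Y^t | X0^t, X1^t, X2^t) = ∑ᵢ H(Y_i | X0_i, X1_i, X2_i)`, and (iii) each `X2_i` is a.s.
a deterministic function of the strict past `(X0_j, Y_j, X2_j)_{j < i}` (so `X2_1` is
a.s. constant), then `∑ᵢ I(X0_i ; X2_i) ≤ ∑ᵢ I(X1_i ; Y_i | X0_i, X2_i)`. -/
theorem converse_information_constraint
    {Ω : Type*} [MeasurableSpace Ω] (μ : Measure Ω) [IsProbabilityMeasure μ]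
    (t : ℕ) (ht : 1 ≤ t)
    (S0 S1 S2 SY : Fin t → Type*)
    [∀ i, Fintype (S0 i)] [∀ i, Fintype (S1 i)] [∀ i, Fintype (S2 i)] [∀ i, Fintype (SY i)]
    (X0 : (i : Fin t) → Ω → S0 i) (X1 : (i : Fin t) → Ω → S1 i)
    (X2 : (i : Fin t) → Ω → S2 i) (Y : (i : Fin t) → Ω → SY i)
    (hm0 : ∀ i s, MeasurableSet (X0 i ⁻¹' {s}))
    (hm1 : ∀ i s, MeasurableSet (X1 i ⁻¹' {s}))
    (hm2 : ∀ i s, MeasurableSet (X2 i ⁻¹' {s}))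
    (hmY : ∀ i s, MeasurableSet (Y i ⁻¹' {s}))
    (hindep : ∀ s : (i : Fin t) → S0 i,
      μ (⋂ i, X0 i ⁻¹' {s i}) = ∏ i, μ (X0 i ⁻¹' {s i}))
    (hmemoryless : condH μ (fun ω => fun i => Y i ω)
        (fun ω => ((fun i => X0 i ω), (fun i => X1 i ω), (fun i => X2 i ω))) =
      ∑ i, condH μ (Y i) (fun ω => (X0 i ω, X1 i ω, X2 i ω)))
    (hdet : ∀ i, ∃ f : ((j : Fin t) → S0 j) → ((j : Fin t) → SY j) →
        ((j : Fin t) → S2 j) → S2 i,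
      (∀ a a' b b' c c', (∀ j, j < i → a j = a' j) → (∀ j, j < i → b j = b' j) →
        (∀ j, j < i → c j = c' j) → f a b c = f a' b' c') ∧
      (∀ᵐ ω ∂μ, X2 i ω = f (fun j => X0 j ω) (fun j => Y j ω) (fun j => X2 j ω))) :
    ∑ i, mutI μ (X0 i) (X2 i) ≤
      ∑ i, condMI μ (X1 i) (Y i) (fun ω => (X0 i ω, X2 i ω)) :=
  converse_information_constraint_general μ t S0 S1 S2 SY X0 X1 X2 Y hm0 hm1 hmY hindep hmemoryless
    hdet
end
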